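/- arXiv:1711.09533 — 3 statements merged into one kernel-verified Lean document; each statement's English description precedes it below -/
import Mathlib

section
/- If M = [[A, B],[B', D]] is a symmetric positive definite real matrix partitioned into blocks, then M⁻¹ - [[A⁻¹, 0],[0, 0]] is positive semidefinite, i.e., M⁻¹ ≥ [[A⁻¹, 0],[0, 0]] in the Loewner order. -/
/-!
With `P = fromBlocks A⁻¹ 0 0 0`, a block computation gives
`M - M P M = fromBlocks 0 0 0 S` for the Schur complement `S = D - Bᵀ A⁻¹ B`, which is positive
semidefinite because `M` is. Then `M⁻¹ - P = M⁻¹ (M - M P M) M⁻¹` is a congruence of a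
positive semidefinite matrix by the symmetric matrix `M⁻¹`.
-/

open Matrix

namespace Matrix

variable {m n R : Type*} [Fintype m] [Fintype n] [DecidableEq n]

theorem fromBlocks_sub_mul_fromBlocks_inv_mul [DecidableEq m] [CommRing R] {A : Matrix m m R}
    (hA : IsUnit A.det) (B : Matrix m n R) (C : Matrix n m R) (D : Matrix n n R) :
    fromBlocks A B C D - fromBlocks A B C D * fromBlocks A⁻¹ 0 0 0 * fromBlocks A B C D
      = fromBlocks 0 0 0 (D - C * A⁻¹ * B) := by
  ext (i | i) (j | j) <;>
    simp [fromBlocks_multiply, mul_nonsing_inv A hA, nonsing_inv_mul_cancel_right _ _ hA]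

variable [CommRing R] [PartialOrder R] [StarRing R]

theorem PosSemidef.fromBlocks_zero_zero_zero [StarOrderedRing R] {S : Matrix n n R}
    (hS : S.PosSemidef) :
    (fromBlocks (0 : Matrix m m R) 0 0 S).PosSemidef := by
  convert hS.mul_mul_conjTranspose_same (fromRows (0 : Matrix m n R) (1 : Matrix n n R)) using 1
  ext (i | i) (j | j) <;> simp [fromRows_mul, conjTranspose_fromRows_eq_fromCols_conjTranspose]

theorem PosSemidef.inv_sub_of_sub_mul_mul {M P : Matrix n n R} (hM : M.IsHermitian)
    (hdet : IsUnit M.det) (h : (M - M * P * M).PosSemidef) : (M⁻¹ - P).PosSemidef := by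
  have key : M⁻¹ - P = M⁻¹ * (M - M * P * M) * (M⁻¹)ᴴ := by
    rw [hM.inv.eq, Matrix.mul_sub, Matrix.sub_mul, nonsing_inv_mul M hdet, Matrix.one_mul]
    simp only [Matrix.mul_assoc, nonsing_inv_mul_cancel_left M _ hdet, mul_nonsing_inv M hdet,
      Matrix.mul_one]
  rw [key]
  exact h.mul_mul_conjTranspose_same M⁻¹

end Matrix

theorem inverse_loewner_lower_bound
    (m k : ℕ) (A : Matrix (Fin m) (Fin m) ℝ) (B : Matrix (Fin m) (Fin k) ℝ)
    (D : Matrix (Fin k) (Fin k) ℝ)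
    (hM : (Matrix.fromBlocks A B Bᵀ D).PosDef) :
    ((Matrix.fromBlocks A B Bᵀ D)⁻¹ - Matrix.fromBlocks A⁻¹ 0 0 0).PosSemidef := by
  have hA : A.PosDef := by
    convert hM.submatrix (e := Sum.inl (β := Fin k)) Sum.inl_injective
    ext; simp
  let := hA.isUnit.invertible
  have hSchur : (D - Bᵀ * A⁻¹ * B).PosSemidef := by
    simpa using (PosDef.fromBlocks₁₁ B D hA).mp hM.posSemidef
  refine PosSemidef.inv_sub_of_sub_mul_mul hM.isHermitian
    ((isUnit_iff_isUnit_det _).mp hM.isUnit) ?_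
  rw [fromBlocks_sub_mul_fromBlocks_inv_mul ((isUnit_iff_isUnit_det _).mp hA.isUnit)]
  exact hSchur.fromBlocks_zero_zero_zero
end

section
/- Let u ∈ ℝ^d be a unit vector, g₁,...,g_n ∈ ℝ^d, S = (1/n)∑ gᵢgᵢ' with smallest eigenvalue σ > 0, g* = max_i ‖gᵢ‖, and suppose ρ ≥ 0 satisfies u'∑_i [gᵢ u'gᵢ ρ / (1 + ρ u'gᵢ)] /n ≤ M for some M ≥ 0 with 1 + ρ u'gᵢ > 0 for all i. Then ρσ/(1 + ρg*) ≤ M. -/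
open Matrix Finset

theorem lagrange_multiplier_bound
    (n d : ℕ) (hn : 0 < n) (u : Fin d → ℝ) (hu : u ⬝ᵥ u = 1)
    (g : Fin n → (Fin d → ℝ)) (σ gstar ρ M : ℝ)
    (hσ : 0 < σ)
    (hS : ∀ v : Fin d → ℝ,
      σ * (v ⬝ᵥ v) ≤ v ⬝ᵥ ((n : ℝ)⁻¹ • ∑ i, Matrix.vecMulVec (g i) (g i)).mulVec v)
    (hgstar : ∀ i, Real.sqrt (g i ⬝ᵥ g i) ≤ gstar)
    (hρ : 0 ≤ ρ) (hM : 0 ≤ M)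
    (hpos : ∀ i, 0 < 1 + ρ * (u ⬝ᵥ g i))
    (hineq : (n : ℝ)⁻¹ * ∑ i, ρ * (u ⬝ᵥ g i) ^ 2 / (1 + ρ * (u ⬝ᵥ g i)) ≤ M) :
    ρ * σ / (1 + ρ * gstar) ≤ M := by
  have hg0 : 0 ≤ gstar := le_trans (Real.sqrt_nonneg _) (hgstar ⟨0, hn⟩)
  have hden : 0 < 1 + ρ * gstar := by positivity
  have hquad : ∀ a : Fin d → ℝ, u ⬝ᵥ (vecMulVec a a).mulVec u = (u ⬝ᵥ a) ^ 2 := by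
    intro a
    simp only [dotProduct, mulVec, vecMulVec, Matrix.of_apply, pow_two,
      Finset.sum_mul_sum]
    rw [Finset.sum_congr rfl]
    intro i _
    rw [Finset.mul_sum]
    exact Finset.sum_congr rfl fun j _ => by ring
  have hmv : ((∑ i, vecMulVec (g i) (g i)) : Matrix (Fin d) (Fin d) ℝ).mulVec u
      = ∑ i, (vecMulVec (g i) (g i)).mulVec u := by
    ext j
    simp only [mulVec, dotProduct, Finset.sum_apply, Matrix.sum_apply, Finset.sum_mul]
    exact Finset.sum_comm
  have hSu : σ ≤ (n : ℝ)⁻¹ * ∑ i, (u ⬝ᵥ g i) ^ 2 := by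
    have h := hS u
    rw [hu, mul_one] at h
    calc σ ≤ u ⬝ᵥ ((n : ℝ)⁻¹ • ∑ i, Matrix.vecMulVec (g i) (g i)).mulVec u := h
      _ = (n : ℝ)⁻¹ * ∑ i, (u ⬝ᵥ g i) ^ 2 := by
          rw [Matrix.smul_mulVec, dotProduct_smul, hmv, smul_eq_mul]
          congr 1
          have hds : u ⬝ᵥ (∑ i, vecMulVec (g i) (g i) *ᵥ u)
              = ∑ i, u ⬝ᵥ (vecMulVec (g i) (g i) *ᵥ u) := by
            simp only [dotProduct, Finset.sum_apply, Finset.mul_sum]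
            exact Finset.sum_comm
          rw [hds]
          exact Finset.sum_congr rfl fun i _ => hquad _
  have hcs : ∀ i, u ⬝ᵥ g i ≤ gstar := by
    intro i
    have h1 : (u ⬝ᵥ g i) ^ 2 ≤ (u ⬝ᵥ u) * (g i ⬝ᵥ g i) := by
      have := Finset.sum_mul_sq_le_sq_mul_sq Finset.univ u (g i)
      simpa [dotProduct, pow_two] using this
    rw [hu, one_mul] at h1
    have h2 : u ⬝ᵥ g i ≤ Real.sqrt (g i ⬝ᵥ g i) := by
      have h3 := Real.sqrt_le_sqrt h1
      rw [Real.sqrt_sq_eq_abs] at h3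
      exact (le_abs_self _).trans h3
    exact h2.trans (hgstar i)
  -- termwise bound
  have hterm : ∀ i, ρ * (u ⬝ᵥ g i) ^ 2 / (1 + ρ * gstar)
      ≤ ρ * (u ⬝ᵥ g i) ^ 2 / (1 + ρ * (u ⬝ᵥ g i)) := by
    intro i
    apply div_le_div_of_nonneg_left (by positivity) (hpos i)
    have := hcs i
    nlinarith
  have key : ρ * σ / (1 + ρ * gstar)
      ≤ (n : ℝ)⁻¹ * ∑ i, ρ * (u ⬝ᵥ g i) ^ 2 / (1 + ρ * (u ⬝ᵥ g i)) := by
    calc ρ * σ / (1 + ρ * gstar)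
        ≤ ρ * ((n : ℝ)⁻¹ * ∑ i, (u ⬝ᵥ g i) ^ 2) / (1 + ρ * gstar) := by
          gcongr
      _ = (n : ℝ)⁻¹ * ∑ i, ρ * (u ⬝ᵥ g i) ^ 2 / (1 + ρ * gstar) := by
          rw [show ρ * ((n : ℝ)⁻¹ * ∑ i, (u ⬝ᵥ g i) ^ 2) / (1 + ρ * gstar)
              = (n : ℝ)⁻¹ * (ρ * (∑ i, (u ⬝ᵥ g i) ^ 2) / (1 + ρ * gstar)) from by ring]
          congr 1
          rw [Finset.mul_sum, Finset.sum_div]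
      _ ≤ (n : ℝ)⁻¹ * ∑ i, ρ * (u ⬝ᵥ g i) ^ 2 / (1 + ρ * (u ⬝ᵥ g i)) := by
          apply mul_le_mul_of_nonneg_left (Finset.sum_le_sum fun i _ => hterm i)
          positivity
  exact key.trans hineq
end

section
/- Let f(λ) = (1/n)∑_{l=1}^n g_l/(1 + λ'g_l) for vectors g_l ∈ ℝ^d, defined on {λ : 1 + λ'g_l > 0 for all l}. If S = (1/n)∑ g_lg_l' is positive definite, then f is continuously differentiable with Jacobian Df(λ) = −(1/n)∑ g_lg_l'/(1 + λ'g_l)², which is negative definite; hence f is injective on its (convex) domain. -/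
/-!
Since `1/(1 + λ⬝g) - 1/(1 + μ⬝g) = -((λ - μ)⬝g) / ((1 + λ⬝g)(1 + μ⬝g))`, the score satisfies the
exact secant identity `f λ - f μ = -M(λ, μ) (λ - μ)` with
`M(λ, μ) = (1/n) ∑ g gᵀ / ((1 + λ⬝g)(1 + μ⬝g))`. On the domain this is a Gram matrix of the `g_l`
with positive weights, hence positive definite because `S` is: the quadratic form of `S` vanishes
only at `0`. So `f λ = f μ` forces `λ = μ`, and `M(λ, λ)` is minus the Jacobian.
-/

open Matrix Finset

section WeightedGram

variable {ι m : Type*} [Fintype ι] (g : ι → m → ℝ)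

noncomputable def weightedGram (w : ι → ℝ) : Matrix m m ℝ :=
  ∑ l, w l • vecMulVec (g l) (g l)

theorem smul_weightedGram (c : ℝ) (w : ι → ℝ) :
    c • weightedGram g w = weightedGram g fun l => c * w l := by
  simp only [weightedGram, Finset.smul_sum, smul_smul]

theorem isHermitian_weightedGram (w : ι → ℝ) : (weightedGram g w).IsHermitian := by
  simp only [IsHermitian, weightedGram, conjTranspose_eq_transpose_of_trivial, transpose_sum,
    transpose_smul, transpose_vecMulVec]

variable [Fintype m]

theorem weightedGram_mulVec (w : ι → ℝ) (x : m → ℝ) :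
    weightedGram g w *ᵥ x = ∑ l, (w l * (g l ⬝ᵥ x)) • g l := by
  simp only [weightedGram, sum_mulVec, smul_mulVec, vecMulVec_mulVec, op_smul_eq_smul, smul_smul]

theorem dotProduct_weightedGram_mulVec (w : ι → ℝ) (x : m → ℝ) :
    x ⬝ᵥ (weightedGram g w *ᵥ x) = ∑ l, w l * (g l ⬝ᵥ x) ^ 2 := by
  simp only [weightedGram_mulVec, dotProduct_sum, dotProduct_smul, smul_eq_mul]
  exact Finset.sum_congr rfl fun l _ => by rw [dotProduct_comm x]; ring

variable {g}

theorem Matrix.PosDef.weightedGram_of_pos {w v : ι → ℝ} (hw : (weightedGram g w).PosDef)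
    (hv_nonneg : ∀ l, 0 ≤ v l) (hv_pos : ∀ l, 0 < w l → 0 < v l) :
    (weightedGram g v).PosDef := by
  refine PosDef.of_dotProduct_mulVec_pos (isHermitian_weightedGram g v) fun x hx => ?_
  have hwx := hw.dotProduct_mulVec_pos hx
  rw [star_trivial, dotProduct_weightedGram_mulVec] at hwx ⊢
  rw [← sum_const_zero (s := (univ : Finset ι))] at hwx
  obtain ⟨l, -, hl⟩ := Finset.exists_lt_of_sum_lt hwx
  have hsq : 0 < (g l ⬝ᵥ x) ^ 2 :=
    lt_of_le_of_ne (sq_nonneg _) fun h => by rw [← h, mul_zero] at hl; exact hl.false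
  refine Finset.sum_pos' (fun l _ => mul_nonneg (hv_nonneg l) (sq_nonneg _))
    ⟨l, mem_univ l, mul_pos (hv_pos l (pos_of_mul_pos_left hl hsq.le)) hsq⟩

theorem Matrix.PosDef.smul_weightedGram_of_pos {c : ℝ} {w : ι → ℝ} (hc : 0 ≤ c)
    (hS : (c • ∑ l, vecMulVec (g l) (g l)).PosDef) (hw : ∀ l, 0 < w l) :
    (c • weightedGram g w).PosDef := by
  have hS' : (weightedGram g fun _ => c).PosDef := by
    simpa only [weightedGram, Finset.smul_sum] using hS
  rw [smul_weightedGram]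
  exact hS'.weightedGram_of_pos (fun l => mul_nonneg hc (hw l).le) fun l hcl => mul_pos hcl (hw l)

end WeightedGram

theorem hasFDerivAt_inv_one_add_dotProduct_smul {m : Type*} [Fintype m] (v lam : m → ℝ)
    (h : 1 + lam ⬝ᵥ v ≠ 0) :
    HasFDerivAt (fun lam => (1 + lam ⬝ᵥ v)⁻¹ • v)
      (LinearMap.toContinuousLinearMap
        (-(((1 + lam ⬝ᵥ v) ^ 2)⁻¹ • vecMulVec v v)).mulVecLin) lam := by
  have hdot : HasFDerivAt (fun lam => 1 + lam ⬝ᵥ v)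
      (LinearMap.toContinuousLinearMap (dotProductBilin ℝ ℝ v)) lam := by
    simpa [dotProduct_comm v] using
      ((dotProductBilin ℝ ℝ v).toContinuousLinearMap.hasFDerivAt (x := lam)).const_add 1
  refine (((hasDerivAt_inv h).comp_hasFDerivAt lam hdot).smul_const v).congr_fderiv ?_
  ext x i
  simp only [neg_smul, ContinuousLinearMap.smulRight_apply, _root_.neg_apply, _root_.smul_apply,
    LinearMap.coe_toContinuousLinearMap', dotProductBilin_apply_apply, smul_eq_mul, Pi.smul_apply,
    map_neg, map_smul, mulVecBilin_apply, vecMulVec_mulVec, op_smul_eq_smul, Pi.neg_apply]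
  ring

section Score

variable {ι m : Type*} [Fintype m]

def elDomain (g : ι → m → ℝ) : Set (m → ℝ) :=
  {lam | ∀ l, 0 < 1 + lam ⬝ᵥ g l}

theorem convex_elDomain (g : ι → m → ℝ) : Convex ℝ (elDomain g) := by
  have : elDomain g = ⋂ l, {lam | -1 < lam ⬝ᵥ g l} := by
    ext lam
    simp only [elDomain, Set.mem_ofPred_eq, Set.mem_iInter, neg_lt_iff_pos_add']
  rw [this]
  exact convex_iInter fun l =>
    convex_halfSpace_gt ⟨fun x y => add_dotProduct x y (g l), fun r x => smul_dotProduct r x (g l)⟩ _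

variable [Fintype ι]

noncomputable def elScore (c : ℝ) (g : ι → m → ℝ) (lam : m → ℝ) : m → ℝ :=
  c • ∑ l, (1 + lam ⬝ᵥ g l)⁻¹ • g l

variable (c : ℝ) (g : ι → m → ℝ)

theorem hasFDerivAt_elScore {lam : m → ℝ} (hlam : lam ∈ elDomain g) :
    HasFDerivAt (elScore c g)
      (LinearMap.toContinuousLinearMap
        (-(c • weightedGram g fun l => ((1 + lam ⬝ᵥ g l) ^ 2)⁻¹)).mulVecLin) lam := by
  have hsum := (HasFDerivAt.fun_sum (u := univ) fun l _ =>
    hasFDerivAt_inv_one_add_dotProduct_smul (g l) lam (hlam l).ne').const_smul c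
  refine hsum.congr_fderiv ?_
  simp only [← toLin'_apply', weightedGram, map_sum, map_neg, map_smul, sum_neg_distrib, smul_neg]

theorem elScore_sub_elScore {a b : m → ℝ} (ha : a ∈ elDomain g) (hb : b ∈ elDomain g) :
    elScore c g a - elScore c g b =
      -((c • weightedGram g fun l => ((1 + a ⬝ᵥ g l) * (1 + b ⬝ᵥ g l))⁻¹) *ᵥ (a - b)) := by
  rw [smul_mulVec, weightedGram_mulVec, elScore, elScore, ← smul_sub, ← sum_sub_distrib, ← smul_neg,
    ← sum_neg_distrib]
  congr 1
  refine Finset.sum_congr rfl fun l _ => ?_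
  rw [← sub_smul, ← neg_smul]
  congr 1
  have := (ha l).ne'
  have := (hb l).ne'
  rw [dotProduct_sub, dotProduct_comm (g l) a, dotProduct_comm (g l) b]
  field_simp
  ring

theorem injOn_elScore (hc : 0 ≤ c) (hS : (c • ∑ l, vecMulVec (g l) (g l)).PosDef) :
    Set.InjOn (elScore c g) (elDomain g) := by
  intro a ha b hb hab
  have hM := hS.smul_weightedGram_of_pos hc fun l => inv_pos.mpr (mul_pos (ha l) (hb l))
  by_contra hne
  have hpos := hM.dotProduct_mulVec_pos (sub_ne_zero.mpr hne)
  rw [← neg_neg (_ *ᵥ _), ← elScore_sub_elScore c g ha hb, hab, sub_self, neg_zero,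
    dotProduct_zero] at hpos
  exact hpos.false

end Score

theorem score_function_injective_general
    (n d : ℕ) (g : Fin n → (Fin d → ℝ))
    (hS : ((n : ℝ)⁻¹ • ∑ l, Matrix.vecMulVec (g l) (g l)).PosDef) :
    Convex ℝ {lam : Fin d → ℝ | ∀ l, 0 < 1 + lam ⬝ᵥ g l} ∧
    (∀ lam ∈ {lam : Fin d → ℝ | ∀ l, 0 < 1 + lam ⬝ᵥ g l},
      HasFDerivAt (fun lam : Fin d → ℝ => (n : ℝ)⁻¹ • ∑ l, (1 + lam ⬝ᵥ g l)⁻¹ • g l)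
        (LinearMap.toContinuousLinearMap
          ((-((n : ℝ)⁻¹ • ∑ l, ((1 + lam ⬝ᵥ g l) ^ 2)⁻¹ •
            Matrix.vecMulVec (g l) (g l))).mulVecLin)) lam ∧
      (-(-((n : ℝ)⁻¹ • ∑ l, ((1 + lam ⬝ᵥ g l) ^ 2)⁻¹ •
            Matrix.vecMulVec (g l) (g l)))).PosDef) ∧
    Set.InjOn (fun lam : Fin d → ℝ => (n : ℝ)⁻¹ • ∑ l, (1 + lam ⬝ᵥ g l)⁻¹ • g l)
      {lam : Fin d → ℝ | ∀ l, 0 < 1 + lam ⬝ᵥ g l} := by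
  have hc : (0 : ℝ) ≤ (n : ℝ)⁻¹ := by positivity
  refine ⟨convex_elDomain g, fun lam hlam => ⟨hasFDerivAt_elScore _ g hlam, ?_⟩,
    injOn_elScore _ g hc hS⟩
  rw [neg_neg]
  exact hS.smul_weightedGram_of_pos hc fun l => inv_pos.mpr (pow_pos (hlam l) 2)

theorem score_function_injective
    (n d : ℕ) (hn : 0 < n) (g : Fin n → (Fin d → ℝ))
    (hS : ((n : ℝ)⁻¹ • ∑ l, Matrix.vecMulVec (g l) (g l)).PosDef) :
    Convex ℝ {lam : Fin d → ℝ | ∀ l, 0 < 1 + lam ⬝ᵥ g l} ∧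
    (∀ lam ∈ {lam : Fin d → ℝ | ∀ l, 0 < 1 + lam ⬝ᵥ g l},
      HasFDerivAt (fun lam : Fin d → ℝ => (n : ℝ)⁻¹ • ∑ l, (1 + lam ⬝ᵥ g l)⁻¹ • g l)
        (LinearMap.toContinuousLinearMap
          ((-((n : ℝ)⁻¹ • ∑ l, ((1 + lam ⬝ᵥ g l) ^ 2)⁻¹ •
            Matrix.vecMulVec (g l) (g l))).mulVecLin)) lam ∧
      (-(-((n : ℝ)⁻¹ • ∑ l, ((1 + lam ⬝ᵥ g l) ^ 2)⁻¹ •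
            Matrix.vecMulVec (g l) (g l)))).PosDef) ∧
    Set.InjOn (fun lam : Fin d → ℝ => (n : ℝ)⁻¹ • ∑ l, (1 + lam ⬝ᵥ g l)⁻¹ • g l)
      {lam : Fin d → ℝ | ∀ l, 0 < 1 + lam ⬝ᵥ g l} :=
  score_function_injective_general n d g hS
end
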